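/- A T₀ space X is QI₂-continuous if and only if for every x ∈ X there exists an irreducible subset ℱ of the Smyth power space P_S(X) such that ℱ ⊆ w(x) and ↑x = ⋂ℱ, where w(x) = {↑F : F nonempty finite and F ≪_{I₂} x}. -/

import Mathlib

open Set

/-- Specialization order: `x ≤ y` iff `x ∈ cl {y}`. -/
def specLE {X : Type} [TopologicalSpace X] (x y : X) : Prop := x ∈ closure {y}

/-- Upward closure w.r.t. the specialization order. -/
def upClosure {X : Type} [TopologicalSpace X] (A : Set X) : Set X :=
  {y | ∃ a ∈ A, specLE a y}

/-- The underlying set of the Smyth power space: nonempty compact saturated subsets. -/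
def SmythPS (X : Type) [TopologicalSpace X] : Type :=
  {K : Set X // K.Nonempty ∧ IsCompact K ∧ ∀ x ∈ K, ∀ y, specLE x y → y ∈ K}

/-- `□U = {K ∈ Q(X) : K ⊆ U}`. -/
def boxU {X : Type} [TopologicalSpace X] (U : Set X) : Set (SmythPS X) :=
  {K : SmythPS X | K.1 ⊆ U}

/-- The upper Vietoris topology on the Smyth power space. -/
instance smythTop (X : Type) [TopologicalSpace X] : TopologicalSpace (SmythPS X) :=
  TopologicalSpace.generateFrom {S : Set (SmythPS X) | ∃ U : Set X, IsOpen U ∧ S = boxU U}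

/-- The cut `A^δ = (A^↑)^↓` w.r.t. the specialization order. -/
def cutD {X : Type} [TopologicalSpace X] (A : Set X) : Set X :=
  {x | ∀ u : X, (∀ a ∈ A, specLE a u) → specLE x u}

/-- `U` is SI₂-open. -/
def SI2Open {X : Type} [TopologicalSpace X] (U : Set X) : Prop :=
  IsOpen U ∧ ∀ F : Set X, IsIrreducible F → (cutD F ∩ U).Nonempty → (F ∩ U).Nonempty

/-- `le` makes `I` the index of a net: nonempty, reflexive, transitive, directed. -/
def IsNetOrder {I : Type} (le : I → I → Prop) : Prop :=
  Nonempty I ∧ (∀ i, le i i) ∧ (∀ i j k, le i j → le j k → le i k) ∧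
    (∀ i j, ∃ k, le i k ∧ le j k)

/-- GSI₂-convergence of the net `xi` (indexed by `(I, le)`) to `x`. -/
def GSI2Conv {X : Type} [TopologicalSpace X] {I : Type} (le : I → I → Prop)
    (xi : I → X) (x : X) : Prop :=
  ∃ 𝒢 : Set (Set X), (∀ G ∈ 𝒢, G.Finite ∧ G.Nonempty) ∧
    IsIrreducible {K : SmythPS X | ∃ G ∈ 𝒢, K.1 = upClosure G} ∧
    (∀ U : Set X, IsOpen U → (∃ G ∈ 𝒢, upClosure G ⊆ U) →
      ∃ i₀, ∀ i, le i₀ i → xi i ∈ U) ∧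
    (⋂ G ∈ 𝒢, upClosure G) ⊆ upClosure {x}

/-- `A ≪_{I₂} B`. -/
def WayBelowI2 {X : Type} [TopologicalSpace X] (A B : Set X) : Prop :=
  ∀ D : Set X, IsIrreducible D → (cutD D ∩ B).Nonempty → (A ∩ closure D).Nonempty

/-- `w(x) = {↑F : F nonempty finite, F ≪_{I₂} x}` as a subset of the Smyth power space. -/
def wPS {X : Type} [TopologicalSpace X] (x : X) : Set (SmythPS X) :=
  {K : SmythPS X | ∃ F : Set X, F.Finite ∧ F.Nonempty ∧ WayBelowI2 F {x} ∧ K.1 = upClosure F}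

/-- QI₂-continuity. -/
def QI2Continuous (X : Type) [TopologicalSpace X] : Prop :=
  ∀ x : X, IsIrreducible (wPS x) ∧ upClosure {x} = ⋂ K ∈ wPS x, (K.1 : Set X)

/-- Strong QI₂-continuity. -/
def StronglyQI2Continuous (X : Type) [TopologicalSpace X] : Prop :=
  QI2Continuous X ∧
  ∀ (F : Set X) (x : X) (U : Set X), F.Finite → F.Nonempty → WayBelowI2 F {x} →
    IsOpen U → F ⊆ U → ∃ W : Set X, SI2Open W ∧ x ∈ W ∧ W ⊆ U

/-!
The forward direction takes `ℱ = w(x)`. Conversely, `w(x)` lies in the closure of `ℱ`, hence is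
irreducible. Indeed, if `↑F ∈ w(x)` sits in a basic open set `□U` of `P_S(X)` missed by `ℱ`, every
member of `ℱ` meets `X \ U`, and by the topological Rudin lemma (Zorn plus compactness) some
irreducible closed `A ⊆ X \ U` meets every member of `ℱ`. Since the members are saturated, upper
bounds of `A` lie in `⋂ ℱ = ↑x`, so `x ∈ A^δ`, and `F ≪_{I₂} x` forces `F` to meet `A`,
contradicting `F ⊆ U`. Finally `⋂ w(x) = ↑x` is squeezed between `↑x` and `⋂ ℱ`.
-/

theorem IsIrreducible.of_subset_closure {Y : Type*} [TopologicalSpace Y] {s t : Set Y}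
    (hs : IsIrreducible s) (hst : s ⊆ t) (hts : t ⊆ closure s) : IsIrreducible t := by
  refine ⟨hs.nonempty.mono hst, fun u v hu hv ⟨x, hxt, hxu⟩ ⟨y, hyt, hyv⟩ => ?_⟩
  have hsu : (s ∩ u).Nonempty := inter_comm u s ▸ mem_closure_iff.1 (hts hxt) u hu hxu
  have hsv : (s ∩ v).Nonempty := inter_comm v s ▸ mem_closure_iff.1 (hts hyt) v hv hyv
  obtain ⟨z, hzs, hzuv⟩ := hs.2 u v hu hv hsu hsv
  exact ⟨z, hst hzs, hzuv⟩

section Specialization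

variable {X : Type} [TopologicalSpace X]

lemma specLE_refl (a : X) : specLE a a := subset_closure rfl

lemma specLE_trans {a b c : X} (hab : specLE a b) (hbc : specLE b c) : specLE a c :=
  specializes_iff_mem_closure.1
    ((specializes_iff_mem_closure.2 hbc).trans (specializes_iff_mem_closure.2 hab))

lemma subset_upClosure (A : Set X) : A ⊆ upClosure A := fun a ha => ⟨a, ha, specLE_refl a⟩

lemma mem_cutD_singleton (x : X) : x ∈ cutD ({x} : Set X) := fun _ hu => hu x rfl

lemma mem_upClosure_of_wayBelowI2 {F : Set X} {x : X} (hFx : WayBelowI2 F {x}) :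
    x ∈ upClosure F := by
  obtain ⟨a, haF, hax⟩ := hFx {x} isIrreducible_singleton ⟨x, mem_cutD_singleton x, rfl⟩
  exact ⟨a, haF, hax⟩

lemma upClosure_singleton_subset_of_mem_wPS {x : X} {K : SmythPS X} (hK : K ∈ wPS x) :
    upClosure {x} ⊆ K.1 := by
  obtain ⟨F, -, -, hFx, hKF⟩ := hK
  obtain ⟨a, haF, hax⟩ := mem_upClosure_of_wayBelowI2 hFx
  rintro y ⟨_, rfl, hxy⟩
  exact hKF ▸ ⟨a, haF, specLE_trans hax hxy⟩

end Specialization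

namespace SmythPS

variable {X : Type} [TopologicalSpace X]

lemma isOpen_boxU {U : Set X} (hU : IsOpen U) : IsOpen (boxU U) :=
  TopologicalSpace.isOpen_generateFrom_of_mem ⟨U, hU, rfl⟩

lemma isTopologicalBasis_boxU :
    TopologicalSpace.IsTopologicalBasis
      {S : Set (SmythPS X) | ∃ U : Set X, IsOpen U ∧ S = boxU U} :=
  TopologicalSpace.isTopologicalBasis_of_subbasis_of_finiteInter rfl
    { univ_mem :=
        ⟨univ, isOpen_univ, (eq_univ_of_forall fun K => (subset_univ K.1 : K ∈ boxU univ)).symm⟩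
      inter_mem := by
        rintro _ ⟨U, hU, rfl⟩ _ ⟨V, hV, rfl⟩
        exact ⟨U ∩ V, hU.inter hV, (ext fun K => subset_inter_iff).symm⟩ }

lemma mem_closure_iff_boxU {ℱ : Set (SmythPS X)} {K : SmythPS X} :
    K ∈ closure ℱ ↔ ∀ U : Set X, IsOpen U → K.1 ⊆ U → ∃ L ∈ ℱ, L.1 ⊆ U := by
  rw [isTopologicalBasis_boxU.mem_closure_iff]
  constructor
  · intro h U hU hKU
    obtain ⟨L, hLU, hL⟩ := h _ ⟨U, hU, rfl⟩ hKU
    exact ⟨L, hL, hLU⟩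
  · rintro h _ ⟨U, hU, rfl⟩ hKU
    obtain ⟨L, hL, hLU⟩ := h U hU hKU
    exact ⟨L, hLU, hL⟩

lemma exists_minimal_isClosed_inter_nonempty (ℱ : Set (SmythPS X)) {C : Set X}
    (hC : IsClosed C) (hCℱ : ∀ L ∈ ℱ, (C ∩ L.1).Nonempty) :
    ∃ A ⊆ C, Minimal (fun A : Set X => IsClosed A ∧ ∀ L ∈ ℱ, (A ∩ L.1).Nonempty) A := by
  refine zorn_superset_nonempty _ (fun c hc hchain hcne => ?_) C ⟨hC, hCℱ⟩
  refine ⟨⋂₀ c, ⟨isClosed_sInter fun A hA => (hc hA).1, fun L hL => ?_⟩,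
    fun A hA => sInter_subset_of_mem hA⟩
  by_contra hempty
  have : Nonempty c := hcne.to_subtype
  obtain ⟨⟨A, hA⟩, hLA⟩ := L.2.2.1.elim_directed_family_closed (fun A : c => A.1)
    (fun A => (hc A.2).1) (by rwa [← sInter_eq_iInter, inter_comm, ← not_nonempty_iff_eq_empty])
    fun A B => (hchain.total A.2 B.2).elim (fun h => ⟨A, subset_rfl, h⟩)
      (fun h => ⟨B, h, subset_rfl⟩)
  exact not_nonempty_iff_eq_empty.2 (inter_comm A L.1 ▸ hLA) ((hc hA).2 L hL)

lemma isIrreducible_of_minimal_isClosed_inter_nonempty {ℱ : Set (SmythPS X)}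
    (hℱ : IsIrreducible ℱ) {A : Set X}
    (hA : Minimal (fun A : Set X => IsClosed A ∧ ∀ L ∈ ℱ, (A ∩ L.1).Nonempty) A) :
    IsIrreducible A := by
  obtain ⟨⟨hAcl, hAℱ⟩, hAmin⟩ := hA
  refine ⟨(hAℱ _ hℱ.nonempty.some_mem).mono inter_subset_left,
    fun V₁ V₂ hV₁ hV₂ h₁ h₂ => ?_⟩
  -- by minimality, `A \ V` misses some member of `ℱ`, which therefore lies in `V ∪ Aᶜ`
  have hbox : ∀ V, IsOpen V → (A ∩ V).Nonempty → (ℱ ∩ boxU (V ∪ Aᶜ)).Nonempty := by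
    intro V hV ⟨z, hzA, hzV⟩
    by_contra hno
    have hmeet : ∀ L ∈ ℱ, (A \ V ∩ L.1).Nonempty := fun L hL => by
      by_contra hL'
      exact hno ⟨L, hL, fun y hy => or_iff_not_imp_left.2 fun hyV hyA => hL' ⟨y, ⟨hyA, hyV⟩, hy⟩⟩
    exact (hAmin ⟨hAcl.sdiff hV, hmeet⟩ sdiff_subset hzA).2 hzV
  obtain ⟨L, hL, hL₁, hL₂⟩ := hℱ.2 _ _ (isOpen_boxU (hV₁.union hAcl.isOpen_compl))
    (isOpen_boxU (hV₂.union hAcl.isOpen_compl)) (hbox V₁ hV₁ h₁) (hbox V₂ hV₂ h₂)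
  obtain ⟨z, hzA, hzL⟩ := hAℱ L hL
  exact ⟨z, hzA, (hL₁ hzL).resolve_right (not_not.2 hzA), (hL₂ hzL).resolve_right (not_not.2 hzA)⟩

/-- The topological Rudin lemma. -/
theorem exists_isIrreducible_isClosed_subset_inter_nonempty {ℱ : Set (SmythPS X)}
    (hℱ : IsIrreducible ℱ) {C : Set X} (hC : IsClosed C) (hCℱ : ∀ L ∈ ℱ, (C ∩ L.1).Nonempty) :
    ∃ A ⊆ C, IsIrreducible A ∧ IsClosed A ∧ ∀ L ∈ ℱ, (A ∩ L.1).Nonempty := by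
  obtain ⟨A, hAC, hA⟩ := exists_minimal_isClosed_inter_nonempty ℱ hC hCℱ
  exact ⟨A, hAC, isIrreducible_of_minimal_isClosed_inter_nonempty hℱ hA, hA.1⟩

lemma exists_mem_subset_of_wayBelowI2 {x : X} {ℱ : Set (SmythPS X)} (hℱ : IsIrreducible ℱ)
    (hℱx : ⋂ K ∈ ℱ, K.1 ⊆ upClosure {x}) {F U : Set X} (hFx : WayBelowI2 F {x})
    (hU : IsOpen U) (hFU : F ⊆ U) : ∃ L ∈ ℱ, L.1 ⊆ U := by
  by_contra! hℱU
  have hℱUc : ∀ L ∈ ℱ, (Uᶜ ∩ L.1).Nonempty := fun L hL => by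
    obtain ⟨z, hzL, hzU⟩ := not_subset.1 (hℱU L hL)
    exact ⟨z, hzU, hzL⟩
  obtain ⟨A, hAU, hA, hAcl, hAℱ⟩ :=
    exists_isIrreducible_isClosed_subset_inter_nonempty hℱ hU.isClosed_compl hℱUc
  have hxA : x ∈ cutD A := fun u hu => by
    have hu : u ∈ ⋂ K ∈ ℱ, K.1 := mem_iInter₂.2 fun L hL => by
      obtain ⟨z, hzA, hzL⟩ := hAℱ L hL
      exact L.2.2.2 z hzL u (hu z hzA)
    obtain ⟨_, rfl, hxu⟩ := hℱx hu
    exact hxu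
  obtain ⟨a, haF, haA⟩ := hFx A hA ⟨x, hxA, rfl⟩
  exact hAU (hAcl.closure_subset haA) (hFU haF)

lemma wPS_subset_closure {x : X} {ℱ : Set (SmythPS X)} (hℱ : IsIrreducible ℱ)
    (hℱx : ⋂ K ∈ ℱ, K.1 ⊆ upClosure {x}) : wPS x ⊆ closure ℱ := by
  rintro K ⟨F, -, -, hFx, hKF⟩
  exact mem_closure_iff_boxU.2 fun U hU hKU =>
    exists_mem_subset_of_wayBelowI2 hℱ hℱx hFx hU ((subset_upClosure F).trans (hKF ▸ hKU))

end SmythPS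

theorem stmt18_general {X : Type} [TopologicalSpace X] :
    QI2Continuous X ↔
      ∀ x : X, ∃ ℱ : Set (SmythPS X), ℱ ⊆ wPS x ∧ IsIrreducible ℱ ∧
        upClosure {x} = ⋂ K ∈ ℱ, (K.1 : Set X) := by
  refine ⟨fun h x => ⟨wPS x, Subset.rfl, h x⟩, fun h x => ?_⟩
  obtain ⟨ℱ, hℱw, hℱ, hx⟩ := h x
  have hwℱ : wPS x ⊆ closure ℱ := SmythPS.wPS_subset_closure hℱ hx.superset
  refine ⟨hℱ.of_subset_closure hℱw hwℱ, Subset.antisymm ?_ ?_⟩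
  · exact subset_iInter₂ fun K hK => upClosure_singleton_subset_of_mem_wPS hK
  · exact hx ▸ biInter_mono hℱw fun _ _ => Subset.rfl

theorem stmt18 {X : Type} [TopologicalSpace X] [T0Space X] :
    QI2Continuous X ↔
      ∀ x : X, ∃ ℱ : Set (SmythPS X), ℱ ⊆ wPS x ∧ IsIrreducible ℱ ∧
        upClosure {x} = ⋂ K ∈ ℱ, (K.1 : Set X) :=
  stmt18_general
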